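/- If the multi-conclusion sequent Γ ⊢ Δ has a classical proof in cut-free classical sequent calculus, then the sequent |Γ|, ¬|Δ| ⊢ (with empty right-hand side) has a constructive proof in intuitionistic sequent calculus, where |Γ| is the multiset of light translations of formulas in Γ and ¬|Δ| is the multiset of negations of light translations of formulas in Δ. -/

import Mathlib

/-- Terms: de Bruijn variables and a binary function symbol (union). -/
inductive Tm : Type where
  | var : Nat → Tm
  | cup : Tm → Tm → Tm
deriving DecidableEq

def Tm.rename (f : Nat → Nat) : Tm → Tm
  | .var n => .var (f n)
  | .cup s t => .cup (s.rename f) (t.rename f)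

def Tm.subst (σ : Nat → Tm) : Tm → Tm
  | .var n => σ n
  | .cup s t => .cup (s.subst σ) (t.subst σ)

/-- First-order formulas over Nat-indexed predicate symbols, de Bruijn binders. -/
inductive Fm : Type where
  | atom : Nat → List Tm → Fm
  | top : Fm
  | bot : Fm
  | neg : Fm → Fm
  | and : Fm → Fm → Fm
  | or : Fm → Fm → Fm
  | imp : Fm → Fm → Fm
  | all : Fm → Fm
  | ex : Fm → Fm
deriving DecidableEq

def liftR (f : Nat → Nat) : Nat → Nat
  | 0 => 0
  | n + 1 => f n + 1

def liftS (σ : Nat → Tm) : Nat → Tm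
  | 0 => .var 0
  | n + 1 => (σ n).rename Nat.succ

def Fm.rename (f : Nat → Nat) : Fm → Fm
  | .atom p l => .atom p (l.map (Tm.rename f))
  | .top => .top
  | .bot => .bot
  | .neg A => .neg (A.rename f)
  | .and A B => .and (A.rename f) (B.rename f)
  | .or A B => .or (A.rename f) (B.rename f)
  | .imp A B => .imp (A.rename f) (B.rename f)
  | .all A => .all (A.rename (liftR f))
  | .ex A => .ex (A.rename (liftR f))

def Fm.subst (σ : Nat → Tm) : Fm → Fm
  | .atom p l => .atom p (l.map (Tm.subst σ))
  | .top => .top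
  | .bot => .bot
  | .neg A => .neg (A.subst σ)
  | .and A B => .and (A.subst σ) (B.subst σ)
  | .or A B => .or (A.subst σ) (B.subst σ)
  | .imp A B => .imp (A.subst σ) (B.subst σ)
  | .all A => .all (A.subst (liftS σ))
  | .ex A => .ex (A.subst (liftS σ))

/-- Shift all free variables up by one. -/
def Fm.shift (A : Fm) : Fm := A.rename Nat.succ

/-- Instantiate the outermost bound variable with term `t` : `(t/x)A`. -/
def Fm.inst (t : Tm) (A : Fm) : Fm :=
  A.subst (fun n => match n with | 0 => t | n + 1 => .var n)

/-- Double negation. -/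
def Fm.dn (A : Fm) : Fm := .neg (.neg A)

/-- Cut-free classical multi-conclusion sequent calculus (Figure 1). -/
inductive Cl : List Fm → List Fm → Prop where
  | ax (A : Fm) : Cl [A] [A]
  | perm {Γ Γ' Δ Δ'} : Γ.Perm Γ' → Δ.Perm Δ' → Cl Γ Δ → Cl Γ' Δ'
  | contrL {Γ Δ A} : Cl (A :: A :: Γ) Δ → Cl (A :: Γ) Δ
  | contrR {Γ Δ A} : Cl Γ (A :: A :: Δ) → Cl Γ (A :: Δ)
  | weakL {Γ Δ A} : Cl Γ Δ → Cl (A :: Γ) Δ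
  | weakR {Γ Δ A} : Cl Γ Δ → Cl Γ (A :: Δ)
  | topR {Γ Δ} : Cl Γ (.top :: Δ)
  | botL {Γ Δ} : Cl (.bot :: Γ) Δ
  | negL {Γ Δ A} : Cl Γ (A :: Δ) → Cl (.neg A :: Γ) Δ
  | negR {Γ Δ A} : Cl (A :: Γ) Δ → Cl Γ (.neg A :: Δ)
  | andL {Γ Δ A B} : Cl (A :: B :: Γ) Δ → Cl (.and A B :: Γ) Δ
  | andR {Γ Δ A B} : Cl Γ (A :: Δ) → Cl Γ (B :: Δ) → Cl Γ (.and A B :: Δ)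
  | orL {Γ Δ A B} : Cl (A :: Γ) Δ → Cl (B :: Γ) Δ → Cl (.or A B :: Γ) Δ
  | orR1 {Γ Δ A B} : Cl Γ (A :: Δ) → Cl Γ (.or A B :: Δ)
  | orR2 {Γ Δ A B} : Cl Γ (B :: Δ) → Cl Γ (.or A B :: Δ)
  | impL {Γ Δ A B} : Cl Γ (A :: Δ) → Cl (B :: Γ) Δ → Cl (.imp A B :: Γ) Δ
  | impR {Γ Δ A B} : Cl (A :: Γ) (B :: Δ) → Cl Γ (.imp A B :: Δ)
  | allL {Γ Δ A} (t : Tm) : Cl (A.inst t :: Γ) Δ → Cl (.all A :: Γ) Δ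
  | allR {Γ Δ A} : Cl (Γ.map Fm.shift) (A :: Δ.map Fm.shift) → Cl Γ (.all A :: Δ)
  | exL {Γ Δ A} : Cl (A :: Γ.map Fm.shift) (Δ.map Fm.shift) → Cl (.ex A :: Γ) Δ
  | exR {Γ Δ A} (t : Tm) : Cl Γ (A.inst t :: Δ) → Cl Γ (.ex A :: Δ)

/-- Constructive (intuitionistic) single-conclusion sequent calculus:
the restriction of the classical calculus to sequents with at most one
conclusion, with the adapted ⇒-left rule. -/
inductive Intu : List Fm → Option Fm → Prop where
  | ax (A : Fm) : Intu [A] (some A)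
  | perm {Γ Γ' Δ} : Γ.Perm Γ' → Intu Γ Δ → Intu Γ' Δ
  | contrL {Γ Δ A} : Intu (A :: A :: Γ) Δ → Intu (A :: Γ) Δ
  | weakL {Γ Δ A} : Intu Γ Δ → Intu (A :: Γ) Δ
  | weakR {Γ A} : Intu Γ none → Intu Γ (some A)
  | topR {Γ} : Intu Γ (some .top)
  | botL {Γ Δ} : Intu (.bot :: Γ) Δ
  | negL {Γ A} : Intu Γ (some A) → Intu (.neg A :: Γ) none
  | negR {Γ A} : Intu (A :: Γ) none → Intu Γ (some (.neg A))
  | andL {Γ Δ A B} : Intu (A :: B :: Γ) Δ → Intu (.and A B :: Γ) Δ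
  | andR {Γ A B} : Intu Γ (some A) → Intu Γ (some B) → Intu Γ (some (.and A B))
  | orL {Γ Δ A B} : Intu (A :: Γ) Δ → Intu (B :: Γ) Δ → Intu (.or A B :: Γ) Δ
  | orR1 {Γ A B} : Intu Γ (some A) → Intu Γ (some (.or A B))
  | orR2 {Γ A B} : Intu Γ (some B) → Intu Γ (some (.or A B))
  | impL {Γ Δ A B} : Intu Γ (some A) → Intu (B :: Γ) Δ → Intu (.imp A B :: Γ) Δ
  | impR {Γ A B} : Intu (A :: Γ) (some B) → Intu Γ (some (.imp A B))
  | allL {Γ Δ A} (t : Tm) : Intu (A.inst t :: Γ) Δ → Intu (.all A :: Γ) Δ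
  | allR {Γ A} : Intu (Γ.map Fm.shift) (some A) → Intu Γ (some (.all A))
  | exL {Γ Δ A} : Intu (A :: Γ.map Fm.shift) (Δ.map Fm.shift) → Intu (.ex A :: Γ) Δ
  | exR {Γ A} (t : Tm) : Intu Γ (some (A.inst t)) → Intu Γ (some (.ex A))

/-- Dowek's translation ‖·‖: double negations both before and after each
connective and quantifier, atoms unchanged. -/
def Fm.bar : Fm → Fm
  | .atom p l => .atom p l
  | .top => Fm.dn .top
  | .bot => Fm.dn .bot
  | .neg A => Fm.dn (Fm.dn (.neg A.bar))
  | .and A B => Fm.dn (.and (Fm.dn A.bar) (Fm.dn B.bar))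
  | .or A B => Fm.dn (.or (Fm.dn A.bar) (Fm.dn B.bar))
  | .imp A B => Fm.dn (.imp (Fm.dn A.bar) (Fm.dn B.bar))
  | .all A => Fm.dn (.all (Fm.dn A.bar))
  | .ex A => Fm.dn (.ex (Fm.dn A.bar))

/-- The light translation |·|: like ‖·‖ but the outermost double negation
is removed. -/
def Fm.light : Fm → Fm
  | .atom p l => .atom p l
  | .top => .top
  | .bot => .bot
  | .neg A => .neg (Fm.dn A.bar)
  | .and A B => .and (Fm.dn A.bar) (Fm.dn B.bar)
  | .or A B => .or (Fm.dn A.bar) (Fm.dn B.bar)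
  | .imp A B => .imp (Fm.dn A.bar) (Fm.dn B.bar)
  | .all A => .all (Fm.dn A.bar)
  | .ex A => .ex (Fm.dn A.bar)

/-- A formula is atomic if it is of the form `atom p l`. -/
def Fm.isAtom : Fm → Prop
  | .atom _ _ => True
  | _ => False


/-!
Induction on the classical derivation, reading a conclusion `A` as the hypothesis `¬|A|`.
Since `‖A‖` is either `|A|` or `¬¬|A|`, a hypothesis `¬¬‖A‖` may be traded for `|A|` and a
hypothesis `¬‖A‖` for `¬|A|`. With these two exchanges every classical rule becomes the
corresponding constructive rule, with a `¬`-right step above it and a `¬`-left step below it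
when it acts on a conclusion.
-/

lemma Fm.bar_rename (A : Fm) (f : Nat → Nat) : (A.rename f).bar = A.bar.rename f := by
  induction A generalizing f <;> simp [Fm.rename, Fm.bar, Fm.dn, *]

lemma Fm.bar_subst (A : Fm) (σ : Nat → Tm) : (A.subst σ).bar = A.bar.subst σ := by
  induction A generalizing σ <;> simp [Fm.subst, Fm.bar, Fm.dn, *]

lemma Fm.bar_inst (t : Tm) (A : Fm) : (A.inst t).bar = A.bar.inst t :=
  Fm.bar_subst A _

lemma Fm.light_rename (A : Fm) (f : Nat → Nat) : (A.rename f).light = A.light.rename f := by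
  cases A <;> simp [Fm.rename, Fm.light, Fm.dn, Fm.bar_rename]

lemma Fm.bar_eq_light_or_dn (A : Fm) : A.bar = A.light ∨ A.bar = Fm.dn A.light := by
  cases A <;> simp [Fm.bar, Fm.light, Fm.dn]

namespace Intu

variable {Γ : List Fm}

lemma dn_left {X : Fm} (h : Intu (X :: Γ) none) : Intu (Fm.dn X :: Γ) none :=
  negL (negR h)

lemma neg_bar_left {A : Fm} (h : Intu (Fm.neg A.light :: Γ) none) :
    Intu (Fm.neg A.bar :: Γ) none := by
  rcases A.bar_eq_light_or_dn with e | e <;> rw [e]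
  · exact h
  · exact dn_left h

lemma dn_bar_left {A : Fm} (h : Intu (A.light :: Γ) none) : Intu (Fm.dn A.bar :: Γ) none := by
  rcases A.bar_eq_light_or_dn with e | e <;> rw [e]
  · exact dn_left h
  · exact dn_left (dn_left h)

lemma dn_bar_right {A : Fm} (h : Intu (Fm.neg A.light :: Γ) none) :
    Intu Γ (some (Fm.dn A.bar)) :=
  negR (neg_bar_left h)

lemma swap_left {X Y : Fm} {Δ : Option Fm} (h : Intu (X :: Y :: Γ) Δ) :
    Intu (Y :: X :: Γ) Δ :=
  perm (List.Perm.swap _ _ _) h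

end Intu

/-- The sequent `|Γ|, ¬|Δ| ⊢` as a list of hypotheses. -/
def lightCtx (Γ Δ : List Fm) : List Fm :=
  Γ.map Fm.light ++ Δ.map (fun B => Fm.neg B.light)

lemma lightCtx_cons_left (Γ Δ : List Fm) (A : Fm) :
    lightCtx (A :: Γ) Δ = A.light :: lightCtx Γ Δ :=
  rfl

lemma lightCtx_cons_right_perm (Γ Δ : List Fm) (A : Fm) :
    (lightCtx Γ (A :: Δ)).Perm (Fm.neg A.light :: lightCtx Γ Δ) :=
  List.perm_middle

namespace Intu

variable {Γ Δ : List Fm} {A : Fm}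

lemma lightCtx_cons_right_iff :
    Intu (lightCtx Γ (A :: Δ)) none ↔ Intu (Fm.neg A.light :: lightCtx Γ Δ) none :=
  ⟨perm (lightCtx_cons_right_perm Γ Δ A), perm (lightCtx_cons_right_perm Γ Δ A).symm⟩

lemma lightCtx_cons_right_of_light (h : Intu (lightCtx Γ Δ) (some A.light)) :
    Intu (lightCtx Γ (A :: Δ)) none :=
  lightCtx_cons_right_iff.2 (negL h)

lemma dn_bar_of_lightCtx_cons_right (h : Intu (lightCtx Γ (A :: Δ)) none) :
    Intu (lightCtx Γ Δ) (some (Fm.dn A.bar)) :=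
  dn_bar_right (lightCtx_cons_right_iff.1 h)

end Intu

lemma lightCtx_map_shift (Γ Δ : List Fm) :
    lightCtx (Γ.map Fm.shift) (Δ.map Fm.shift) = (lightCtx Γ Δ).map Fm.shift := by
  simp [lightCtx, Function.comp_def, Fm.shift, Fm.light_rename, Fm.rename]

theorem stmt2 (Γ Δ : List Fm) (h : Cl Γ Δ) :
    Intu (Γ.map Fm.light ++ Δ.map (fun B => Fm.neg B.light)) none := by
  change Intu (lightCtx Γ Δ) none
  induction h with
  | ax A => exact .swap_left (.negL (.ax A.light))
  | perm p q _ ih => exact .perm ((p.map _).append (q.map _)) ih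
  | contrL _ ih => exact .contrL ih
  | contrR _ ih =>
      exact .lightCtx_cons_right_iff.2 (.contrL (.perm ((lightCtx_cons_right_perm _ _ _).cons _)
        (.lightCtx_cons_right_iff.1 ih)))
  | weakL _ ih => exact .weakL ih
  | weakR _ ih => exact .lightCtx_cons_right_iff.2 (.weakL ih)
  | topR => exact .lightCtx_cons_right_of_light .topR
  | botL => exact .botL
  | negL _ ih => exact .dn_left (.neg_bar_left (.lightCtx_cons_right_iff.1 ih))
  | negR _ ih => exact .lightCtx_cons_right_iff.2 (.dn_left (.dn_bar_left ih))
  | andL _ ih => exact .andL (.dn_bar_left (.swap_left (.dn_bar_left (.swap_left ih))))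
  | andR _ _ ih₁ ih₂ =>
      exact .lightCtx_cons_right_of_light
        (.andR ih₁.dn_bar_of_lightCtx_cons_right ih₂.dn_bar_of_lightCtx_cons_right)
  | orL _ _ ih₁ ih₂ => exact .orL (.dn_bar_left ih₁) (.dn_bar_left ih₂)
  | orR1 _ ih => exact .lightCtx_cons_right_of_light (.orR1 ih.dn_bar_of_lightCtx_cons_right)
  | orR2 _ ih => exact .lightCtx_cons_right_of_light (.orR2 ih.dn_bar_of_lightCtx_cons_right)
  | impL _ _ ih₁ ih₂ => exact .impL ih₁.dn_bar_of_lightCtx_cons_right (.dn_bar_left ih₂)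
  | impR _ ih =>
      have ih' := Intu.perm ((lightCtx_cons_right_perm _ _ _).cons _) ih
      exact .lightCtx_cons_right_of_light (.impR (.dn_bar_right (.swap_left ih'.dn_bar_left)))
  | allL t _ ih =>
      rw [lightCtx_cons_left] at ih
      have ih' := ih.dn_bar_left
      rw [Fm.bar_inst] at ih'
      exact .allL t ih'
  | allR _ ih =>
      have ih' := (Intu.lightCtx_cons_right_iff.1 ih).neg_bar_left
      rw [lightCtx_map_shift] at ih'
      exact .lightCtx_cons_right_of_light (.allR (.negR ih'))
  | exL _ ih =>
      rw [lightCtx_cons_left, lightCtx_map_shift] at ih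
      exact .exL ih.dn_bar_left
  | exR t _ ih =>
      have ih' := ih.dn_bar_of_lightCtx_cons_right
      rw [Fm.bar_inst] at ih'
      exact .lightCtx_cons_right_of_light (.exR t ih')
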